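/- arXiv:2401.00716 — 5 statements merged into one kernel-verified Lean document; each statement's English description precedes it below -/
import Mathlib

section
/- For all integers n, m ≥ 1 with n ≠ m, the number of dominating sets of the n×m rook graph R_{n,m} of cardinality min(n,m) equals max(n,m)^{min(n,m)}. -/
open Finset Polynomial

/-- The `n × m` rook graph: vertices are squares `(a,b)`; two distinct squares are
adjacent iff they share a row or a column. -/
def rookGraph (n m : ℕ) : SimpleGraph (Fin n × Fin m) where
  Adj v w := v ≠ w ∧ (v.1 = w.1 ∨ v.2 = w.2)
  symm := by
    constructor
    rintro v w ⟨h1, h2⟩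
    exact ⟨h1.symm, h2.imp Eq.symm Eq.symm⟩
  loopless := by
    constructor
    rintro v ⟨h1, _⟩
    exact h1 rfl

/-- `S` is a dominating set of the `n × m` rook graph. -/
def IsDomSet (n m : ℕ) (S : Finset (Fin n × Fin m)) : Prop :=
  ∀ v, v ∈ S ∨ ∃ u ∈ S, (rookGraph n m).Adj u v

/-- `domCount n m k` is the number of dominating sets of cardinality `k`
of the `n × m` rook graph. -/
noncomputable def domCount (n m k : ℕ) : ℕ :=
  Set.ncard {S : Finset (Fin n × Fin m) | S.card = k ∧ IsDomSet n m S}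

/-- `ECount n m k` is the number of `k`-element subsets of `{1,…,n} × {1,…,m}`
that meet every row and every column. -/
noncomputable def ECount (n m k : ℕ) : ℕ :=
  Set.ncard {T : Finset (Fin n × Fin m) | T.card = k ∧
    (∀ r : Fin n, ∃ c : Fin m, (r, c) ∈ T) ∧ (∀ c : Fin m, ∃ r : Fin n, (r, c) ∈ T)}

/-- The domination polynomial of the `n × m` rook graph, as a polynomial over `ℤ`. -/
noncomputable def domPoly (n m : ℕ) : Polynomial ℤ :=
  ∑ k ∈ Finset.range (n * m + 1), Polynomial.C (domCount n m k : ℤ) * Polynomial.X ^ k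

/-
When `n < m`, a dominating set `S` of `R_{n,m}` with `n` squares meets every row: if row `r`
were empty, the `n` squares of `S` would occupy fewer than `m` columns, and a square of row `r`
in a free column would not be dominated. Having `n` squares in `n` rows, `S` holds exactly one
square per row, i.e. it is the graph of a map `Fin n → Fin m`; conversely every such graph
dominates, since each square shares its row with a square of the graph. This gives `m ^ n`
sets, and transposing the board reduces `n > m` to this case.
-/

namespace RookDomination

variable {n m : ℕ}

def funGraph (f : Fin n → Fin m) : Finset (Fin n × Fin m) :=
  univ.map ⟨fun r => (r, f r), fun _ _ h => (Prod.ext_iff.1 h).1⟩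

theorem mem_funGraph {f : Fin n → Fin m} {v : Fin n × Fin m} : v ∈ funGraph f ↔ f v.1 = v.2 := by
  simp only [funGraph, mem_map, mem_univ, true_and]
  constructor
  · rintro ⟨r, rfl⟩
    rfl
  · intro hv
    exact ⟨v.1, Prod.ext rfl hv⟩

theorem card_funGraph (f : Fin n → Fin m) : (funGraph f).card = n := by
  simp [funGraph]

theorem funGraph_injective : Function.Injective (funGraph : (Fin n → Fin m) → _) := by
  intro f g hfg
  funext r
  have hr : (r, f r) ∈ funGraph g := hfg ▸ mem_funGraph.2 rfl
  exact (mem_funGraph.1 hr).symm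

theorem isDomSet_funGraph (f : Fin n → Fin m) : IsDomSet n m (funGraph f) := by
  intro v
  by_cases hv : f v.1 = v.2
  · exact Or.inl (mem_funGraph.2 hv)
  · exact Or.inr ⟨(v.1, f v.1), mem_funGraph.2 rfl, fun h => hv (congrArg Prod.snd h), Or.inl rfl⟩

theorem exists_mem_row_of_isDomSet {S : Finset (Fin n × Fin m)} (hS : IsDomSet n m S)
    (hcard : S.card < m) (r : Fin n) : ∃ c, (r, c) ∈ S := by
  by_contra! hr
  obtain ⟨c, hc⟩ : ∃ c, c ∉ S.image Prod.snd := by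
    by_contra! hall
    have : (univ : Finset (Fin m)) ⊆ S.image Prod.snd := fun c _ => hall c
    have := (card_le_card this).trans card_image_le
    simp only [card_univ, Fintype.card_fin] at this
    omega
  rcases hS (r, c) with hmem | ⟨⟨r', c'⟩, hu, -, hrow | hcol⟩
  · exact hr c hmem
  · obtain rfl : r' = r := hrow
    exact hr c' hu
  · exact hc (mem_image.2 ⟨_, hu, hcol⟩)

theorem exists_funGraph_eq {S : Finset (Fin n × Fin m)} (hrow : ∀ r, ∃ c, (r, c) ∈ S)
    (hcard : S.card ≤ n) : ∃ f, funGraph f = S := by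
  choose f hf using hrow
  have hsub : funGraph f ⊆ S := by
    rintro ⟨r, c⟩ hv
    obtain rfl : f r = c := mem_funGraph.1 hv
    exact hf r
  exact ⟨f, eq_of_subset_of_card_le hsub (by rwa [card_funGraph])⟩

theorem domCount_of_lt (h : n < m) : domCount n m n = m ^ n := by
  have hsets : {S : Finset (Fin n × Fin m) | S.card = n ∧ IsDomSet n m S}
      = Set.range funGraph := by
    ext S
    constructor
    · rintro ⟨hcard, hS⟩
      exact exists_funGraph_eq (exists_mem_row_of_isDomSet hS (by omega)) hcard.le
    · rintro ⟨f, rfl⟩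
      exact ⟨card_funGraph f, isDomSet_funGraph f⟩
  rw [domCount, hsets, Set.ncard_range_of_injective funGraph_injective]
  simp

def transpose : Finset (Fin n × Fin m) ↪ Finset (Fin m × Fin n) :=
  ⟨map (Equiv.prodComm _ _).toEmbedding, map_injective _⟩

theorem isDomSet_transpose {S : Finset (Fin n × Fin m)} (hS : IsDomSet n m S) :
    IsDomSet m n (transpose S) := by
  intro v
  rcases hS v.swap with hmem | ⟨u, hu, hne, hadj⟩
  · exact Or.inl (mem_map_of_mem _ hmem)
  · refine Or.inr ⟨u.swap, mem_map_of_mem (Equiv.prodComm _ _).toEmbedding hu, ?_, hadj.symm⟩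
    exact fun h => hne (by rw [← h, Prod.swap_swap])

theorem domCount_comm (k : ℕ) : domCount n m k = domCount m n k := by
  have hsets : {S : Finset (Fin m × Fin n) | S.card = k ∧ IsDomSet m n S}
      = transpose '' {S | S.card = k ∧ IsDomSet n m S} := by
    ext S
    constructor
    · rintro ⟨hcard, hS⟩
      refine ⟨transpose S, ⟨by simp [transpose, hcard], isDomSet_transpose hS⟩, ?_⟩
      simp [transpose, Finset.map_map]
    · rintro ⟨T, ⟨hcard, hT⟩, rfl⟩
      exact ⟨by simp [transpose, hcard], isDomSet_transpose hT⟩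
  rw [domCount, domCount, hsets, Set.ncard_image_of_injective _ transpose.injective]

end RookDomination

theorem rook_min_dom_count_ne_general (n m : ℕ) (hnm : n ≠ m) :
    domCount n m (min n m) = max n m ^ min n m := by
  rcases hnm.lt_or_gt with h | h
  · rw [min_eq_left h.le, max_eq_right h.le, RookDomination.domCount_of_lt h]
  · rw [min_eq_right h.le, max_eq_left h.le, RookDomination.domCount_comm,
      RookDomination.domCount_of_lt h]

/-- For `n ≠ m`, the number of minimum dominating sets of the rook graph is
`max n m ^ min n m`. -/
theorem rook_min_dom_count_ne (n m : ℕ) (hn : 1 ≤ n) (hm : 1 ≤ m) (hnm : n ≠ m) :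
    domCount n m (min n m) = max n m ^ min n m :=
  rook_min_dom_count_ne_general n m hnm
end

section
/- For every integer n ≥ 1, the number of dominating sets of the n×n rook graph R_{n,n} of cardinality n equals 2·n^n − n!. -/
open Finset Polynomial

/-!
A set of squares that misses some row `r` and some column `c` does not dominate `(r, c)`, and a
set meeting every row (or every column) dominates everything; so a dominating set of the
`n × n` rook graph is one that meets every row or every column. With exactly `n` squares, meeting
every row means being the graph of a map `Fin n → Fin n`, and meeting every column means being
the transposed graph of such a map: `n ^ n` sets each. They meet both exactly when they are the
graph of a permutation, and inclusion–exclusion gives `2 n ^ n - n!`.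
-/

open Nat

variable {α β : Type*}

def MeetsEveryRow (S : Finset (α × β)) : Prop := ∀ a, ∃ b, (a, b) ∈ S

def MeetsEveryCol (S : Finset (α × β)) : Prop := ∀ b, ∃ a, (a, b) ∈ S

theorem isDomSet_iff_meetsEveryRow_or_meetsEveryCol {n m : ℕ} {S : Finset (Fin n × Fin m)} :
    IsDomSet n m S ↔ MeetsEveryRow S ∨ MeetsEveryCol S := by
  constructor
  · intro hS
    rw [MeetsEveryRow, MeetsEveryCol]
    by_contra! ⟨⟨r, hr⟩, c, hc⟩
    rcases hS (r, c) with hrc | ⟨⟨a, b⟩, hab, -, rfl | rfl⟩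
    exacts [hr c hrc, hr b hab, hc a hab]
  · rintro (hS | hS) ⟨r, c⟩
    · obtain ⟨b, hb⟩ := hS r
      by_cases hbc : b = c
      · exact .inl (hbc ▸ hb)
      · exact .inr ⟨(r, b), hb, by simpa using hbc, .inl rfl⟩
    · obtain ⟨a, ha⟩ := hS c
      by_cases har : a = r
      · exact .inl (har ▸ ha)
      · exact .inr ⟨(a, c), ha, by simpa using har, .inr rfl⟩

theorem meetsEveryCol_iff_meetsEveryRow_map_prodComm {S : Finset (α × β)} :
    MeetsEveryCol S ↔ MeetsEveryRow (S.map (Equiv.prodComm α β).toEmbedding) := by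
  simp [MeetsEveryCol, MeetsEveryRow]

section Graph

variable [Fintype α]

def graphFinset (f : α → β) : Finset (α × β) :=
  univ.map ⟨fun a => (a, f a), fun _ _ h => congrArg Prod.fst h⟩

@[simp]
theorem mem_graphFinset {f : α → β} {p : α × β} : p ∈ graphFinset f ↔ f p.1 = p.2 := by
  simp only [graphFinset, mem_map, mem_univ, true_and]
  exact ⟨by rintro ⟨a, rfl⟩; rfl, fun h => ⟨p.1, Prod.ext rfl h⟩⟩

@[simp]
theorem card_graphFinset (f : α → β) : #(graphFinset f) = Fintype.card α := by
  simp [graphFinset]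

theorem graphFinset_injective : Function.Injective (graphFinset : (α → β) → Finset (α × β)) :=
  fun f g hfg => funext fun a =>
    (mem_graphFinset.1 (hfg ▸ mem_graphFinset.2 rfl : (a, f a) ∈ graphFinset g)).symm

theorem meetsEveryRow_graphFinset (f : α → β) : MeetsEveryRow (graphFinset f) :=
  fun a => ⟨f a, mem_graphFinset.2 rfl⟩

theorem meetsEveryCol_graphFinset_iff {f : α → β} :
    MeetsEveryCol (graphFinset f) ↔ Function.Surjective f := by
  simp [MeetsEveryCol, Function.Surjective]

theorem setOf_card_eq_and_meetsEveryRow :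
    {S : Finset (α × β) | #S = Fintype.card α ∧ MeetsEveryRow S} = Set.range graphFinset := by
  ext S
  constructor
  · rintro ⟨hcard, hS⟩
    choose f hf using hS
    refine ⟨f, eq_of_subset_of_card_le (fun p hp => ?_) (by simp [hcard])⟩
    obtain ⟨a, rfl⟩ : ∃ a, p = (a, f a) := ⟨p.1, Prod.ext rfl (mem_graphFinset.1 hp).symm⟩
    exact hf a
  · rintro ⟨f, rfl⟩
    exact ⟨card_graphFinset f, meetsEveryRow_graphFinset f⟩

variable [Fintype β]

theorem ncard_setOf_card_eq_and_meetsEveryRow :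
    {S : Finset (α × β) | #S = Fintype.card α ∧ MeetsEveryRow S}.ncard =
      Fintype.card β ^ Fintype.card α := by
  rw [setOf_card_eq_and_meetsEveryRow, Set.ncard_range_of_injective graphFinset_injective,
    Nat.card_fun, Nat.card_eq_fintype_card, Nat.card_eq_fintype_card]

theorem ncard_setOf_card_eq_and_meetsEveryCol :
    {S : Finset (α × β) | #S = Fintype.card β ∧ MeetsEveryCol S}.ncard =
      Fintype.card α ^ Fintype.card β := by
  have htranspose : {S : Finset (α × β) | #S = Fintype.card β ∧ MeetsEveryCol S} =
      (Equiv.prodComm α β).finsetCongr ⁻¹'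
        {T : Finset (β × α) | #T = Fintype.card β ∧ MeetsEveryRow T} := by
    ext S
    simp [meetsEveryCol_iff_meetsEveryRow_map_prodComm, Equiv.finsetCongr_apply]
  rw [htranspose, ← Equiv.image_symm_eq_preimage,
    Set.ncard_image_of_injective _ (Equiv.injective _), ncard_setOf_card_eq_and_meetsEveryRow]

end Graph

theorem ncard_setOf_card_eq_and_meetsEveryRow_and_meetsEveryCol [Fintype α] :
    {S : Finset (α × α) | #S = Fintype.card α ∧ MeetsEveryRow S ∧ MeetsEveryCol S}.ncard =
      (Fintype.card α)! := by
  have hperm : {S : Finset (α × α) | #S = Fintype.card α ∧ MeetsEveryRow S ∧ MeetsEveryCol S} =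
      Set.range (graphFinset ∘ DFunLike.coe : Equiv.Perm α → _) := by
    ext S
    constructor
    · rintro ⟨hcard, hrow, hcol⟩
      obtain ⟨f, rfl⟩ : S ∈ Set.range graphFinset := by
        rw [← setOf_card_eq_and_meetsEveryRow]
        exact ⟨hcard, hrow⟩
      have hf : Function.Bijective f :=
        Finite.surjective_iff_bijective.1 (meetsEveryCol_graphFinset_iff.1 hcol)
      exact ⟨Equiv.ofBijective f hf, rfl⟩
    · rintro ⟨σ, rfl⟩
      exact ⟨card_graphFinset σ, meetsEveryRow_graphFinset σ,
        meetsEveryCol_graphFinset_iff.2 σ.surjective⟩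
  rw [hperm, Set.ncard_range_of_injective (graphFinset_injective.comp DFunLike.coe_injective),
    Nat.card_perm, Nat.card_eq_fintype_card]

theorem domCount_self_self_add_factorial (n : ℕ) : domCount n n n + n ! = 2 * n ^ n := by
  set rows := {S : Finset (Fin n × Fin n) | #S = Fintype.card (Fin n) ∧ MeetsEveryRow S}
  set cols := {S : Finset (Fin n × Fin n) | #S = Fintype.card (Fin n) ∧ MeetsEveryCol S}
  have hdom : {S | #S = n ∧ IsDomSet n n S} = rows ∪ cols := by
    ext S
    simp [rows, cols, isDomSet_iff_meetsEveryRow_or_meetsEveryCol, and_or_left]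
  have hboth : rows ∩ cols =
      {S | #S = Fintype.card (Fin n) ∧ MeetsEveryRow S ∧ MeetsEveryCol S} := by
    ext S
    simp only [rows, cols, Set.mem_inter_iff, Set.mem_ofPred_eq]
    tauto
  calc domCount n n n + n ! = (rows ∪ cols).ncard + (rows ∩ cols).ncard := by
        rw [domCount, hdom, hboth,
          ncard_setOf_card_eq_and_meetsEveryRow_and_meetsEveryCol, Fintype.card_fin]
    _ = rows.ncard + cols.ncard := Set.ncard_union_add_ncard_inter _ _
    _ = 2 * n ^ n := by
        rw [ncard_setOf_card_eq_and_meetsEveryRow, ncard_setOf_card_eq_and_meetsEveryCol,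
          Fintype.card_fin, two_mul]

theorem rook_min_dom_count_square_general (n : ℕ) :
    (domCount n n n : ℤ) = 2 * (n : ℤ) ^ n - (n.factorial : ℤ) := by
  rw [← Nat.cast_ofNat, ← Nat.cast_pow, ← Nat.cast_mul, ← domCount_self_self_add_factorial n]
  push_cast
  ring

/-- The number of dominating sets of cardinality `n` of the `n × n` rook graph
is `2 * n ^ n - n!`. -/
theorem rook_min_dom_count_square (n : ℕ) (hn : 1 ≤ n) :
    (domCount n n n : ℤ) = 2 * (n : ℤ) ^ n - (n.factorial : ℤ) :=
  rook_min_dom_count_square_general n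
end

section
/- For all integers n, m ≥ 1 and every integer k with 0 ≤ k ≤ nm, the number of dominating sets of cardinality k of the n×m rook graph satisfies d_{n,m}(k) = C(nm, k) − Σ_{r=1}^{n} Σ_{c=1}^{m} C(n,r) C(m,c) E_{n−r,m−c}(k), where the identity is read in the integers. -/
open Finset Polynomial

/-! A set `S` of squares fails to dominate the rook graph exactly when some row and some column
are both empty. Sorting the non-dominating `k`-sets by their sets `A ⊊ rows`, `B ⊊ columns` of
occupied rows and columns, the sets with given `A` and `B` are the `k`-subsets of `A × B` meeting
every row and every column of `A × B`, so there are `ECount #A #B k` of them. Summing over the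
`C(n, r) C(m, c)` choices of `r = n - #A ≥ 1` empty rows and `c = m - #B ≥ 1` empty columns and
subtracting from `C(nm, k)` gives the formula. -/

open Function

section CoveringSets

variable {α β α' β' : Type*}

theorem image_fst_map_prodMap [DecidableEq α] [DecidableEq α'] (f : α ↪ α') (g : β ↪ β')
    (T : Finset (α × β)) :
    (T.map (f.prodMap g)).image Prod.fst = (T.image Prod.fst).map f := by
  ext; simp

theorem image_snd_map_prodMap [DecidableEq β] [DecidableEq β'] (f : α ↪ α') (g : β ↪ β')
    (T : Finset (α × β)) :
    (T.map (f.prodMap g)).image Prod.snd = (T.image Prod.snd).map g := by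
  ext
  simp only [mem_image, mem_map, Prod.exists, Embedding.coe_prodMap, Prod.map_apply, Prod.mk.injEq]
  grind

variable [Fintype α] [Fintype β] [DecidableEq α] [DecidableEq β]

variable (α β) in
def coveringSets (k : ℕ) : Finset (Finset (α × β)) :=
  {T | #T = k ∧ T.image Prod.fst = univ ∧ T.image Prod.snd = univ}

theorem card_coveringSets_eq_card_filter [Fintype α'] [Fintype β'] [DecidableEq α']
    [DecidableEq β'] (f : α ↪ α') (g : β ↪ β') (k : ℕ) :
    #(coveringSets α β k) = #{S : Finset (α' × β') | #S = k ∧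
      S.image Prod.fst = univ.map f ∧ S.image Prod.snd = univ.map g} := by
  refine card_bij (fun T _ ↦ T.map (f.prodMap g)) ?_ (fun _ _ _ _ h ↦ map_injective _ h) ?_
  · intro T hT
    simp only [coveringSets, mem_filter, mem_univ, true_and] at hT ⊢
    rw [card_map, image_fst_map_prodMap, image_snd_map_prodMap, hT.2.1, hT.2.2]
    exact ⟨hT.1, rfl, rfl⟩
  · intro S hS
    simp only [mem_filter, mem_univ, true_and] at hS
    obtain ⟨hk, hfst, hsnd⟩ := hS
    have hsub : S ⊆ (univ ×ˢ univ).map (f.prodMap g) := by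
      rw [prodMap_map_product, ← hfst, ← hsnd]
      exact subset_product
    obtain ⟨T, -, rfl⟩ := subset_map_iff.mp hsub
    refine ⟨T, ?_, rfl⟩
    rw [image_fst_map_prodMap, map_inj] at hfst
    rw [image_snd_map_prodMap, map_inj] at hsnd
    simp only [coveringSets, mem_filter, mem_univ, true_and]
    exact ⟨by rwa [card_map] at hk, hfst, hsnd⟩

theorem ECount_eq_card_coveringSets (n m k : ℕ) :
    ECount n m k = #(coveringSets (Fin n) (Fin m) k) := by
  rw [ECount, coveringSets, ← Set.ncard_coe_finset]
  congr
  ext T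
  simp [eq_univ_iff_forall]

theorem card_coveringSets (k : ℕ) :
    #(coveringSets α β k) = ECount (Fintype.card α) (Fintype.card β) k := by
  rw [ECount_eq_card_coveringSets, card_coveringSets_eq_card_filter
    (Fintype.equivFin α).toEmbedding (Fintype.equivFin β).toEmbedding]
  simp only [map_univ_equiv, coveringSets]

theorem card_filter_image_fst_eq_image_snd_eq (A : Finset α) (B : Finset β) (k : ℕ) :
    #{S : Finset (α × β) | #S = k ∧ S.image Prod.fst = A ∧ S.image Prod.snd = B} =
      ECount #A #B k := by
  rw [← Fintype.card_coe A, ← Fintype.card_coe B, ← card_coveringSets,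
    card_coveringSets_eq_card_filter (Embedding.subtype (· ∈ A)) (Embedding.subtype (· ∈ B))]
  simp [attach_map_val]

end CoveringSets

theorem sum_filter_nonempty_card {α M : Type*} [Fintype α] [AddCommMonoid M] (g : ℕ → M) :
    ∑ R : Finset α with R.Nonempty, g #R =
      ∑ r ∈ Icc 1 (Fintype.card α), (Fintype.card α).choose r • g r := by
  classical
  have hIcc : Icc 1 (Fintype.card α) = {r ∈ range (Fintype.card α + 1) | r ≠ 0} := by
    ext r; simp only [mem_Icc, mem_filter, mem_range]; omega
  rw [sum_filter, ← powerset_univ, hIcc, sum_filter]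
  simp_rw [nonempty_iff_ne_empty, ne_eq, ← card_eq_zero]
  rw [sum_powerset_apply_card (fun r ↦ if ¬r = 0 then g r else 0), card_univ]
  simp only [smul_ite, smul_zero]

theorem sum_filter_ne_univ_card {α M : Type*} [Fintype α] [DecidableEq α] [AddCommMonoid M]
    (g : ℕ → M) :
    ∑ A : Finset α with A ≠ univ, g #A =
      ∑ r ∈ Icc 1 (Fintype.card α), (Fintype.card α).choose r • g (Fintype.card α - r) := by
  rw [← sum_filter_nonempty_card]
  refine sum_nbij' compl compl ?_ ?_ (fun _ _ ↦ compl_compl _) (fun _ _ ↦ compl_compl _) ?_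
  · simp [nonempty_iff_ne_empty]
  · simp [nonempty_iff_ne_empty]
  · intro A _
    rw [card_compl, Nat.sub_sub_self (card_le_univ A)]

theorem isDomSet_iff {n m : ℕ} (S : Finset (Fin n × Fin m)) :
    IsDomSet n m S ↔ ∀ a b, a ∈ S.image Prod.fst ∨ b ∈ S.image Prod.snd := by
  have closedNbhd (v : Fin n × Fin m) :
      (v ∈ S ∨ ∃ u ∈ S, (rookGraph n m).Adj u v) ↔ ∃ u ∈ S, u.1 = v.1 ∨ u.2 = v.2 := by
    constructor
    · rintro (hv | ⟨u, hu, -, hadj⟩)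
      exacts [⟨v, hv, .inl rfl⟩, ⟨u, hu, hadj⟩]
    · rintro ⟨u, hu, hshare⟩
      by_cases huv : u = v
      · exact .inl (huv ▸ hu)
      · exact .inr ⟨u, hu, huv, hshare⟩
  rw [IsDomSet, Prod.forall]
  refine forall₂_congr fun a b ↦ (closedNbhd (a, b)).trans ?_
  simp only [mem_image, and_or_left, exists_or]

instance (n m : ℕ) : DecidablePred (IsDomSet n m) :=
  fun S ↦ decidable_of_iff _ (isDomSet_iff S).symm

theorem not_isDomSet_iff {n m : ℕ} (S : Finset (Fin n × Fin m)) :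
    ¬ IsDomSet n m S ↔ S.image Prod.fst ≠ univ ∧ S.image Prod.snd ≠ univ := by
  simp only [isDomSet_iff, not_forall, not_or, ne_eq, eq_univ_iff_forall, exists_and_left,
    exists_and_right]

theorem card_filter_image_fst_ne_univ_image_snd_ne_univ {α β : Type*} [Fintype α] [Fintype β]
    [DecidableEq α] [DecidableEq β] (k : ℕ) :
    #{S : Finset (α × β) | #S = k ∧ S.image Prod.fst ≠ univ ∧ S.image Prod.snd ≠ univ} =
      ∑ r ∈ Icc 1 (Fintype.card α), ∑ c ∈ Icc 1 (Fintype.card β),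
        (Fintype.card α).choose r * (Fintype.card β).choose c *
          ECount (Fintype.card α - r) (Fintype.card β - c) k := by
  rw [card_eq_sum_card_fiberwise (f := fun S ↦ (S.image Prod.fst, S.image Prod.snd))
    (t := ({A | A ≠ univ} : Finset (Finset α)) ×ˢ ({B | B ≠ univ} : Finset (Finset β)))
    (by intro S; simp +contextual), sum_product]
  have hfiber (A : Finset α) (B : Finset β) (hA : A ≠ univ) (hB : B ≠ univ) :
      #{S ∈ ({S | #S = k ∧ S.image Prod.fst ≠ univ ∧ S.image Prod.snd ≠ univ} :
          Finset (Finset (α × β))) | (S.image Prod.fst, S.image Prod.snd) = (A, B)} =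
        ECount #A #B k := by
    rw [← card_filter_image_fst_eq_image_snd_eq, filter_filter]
    congr! 2 with S
    simp only [Prod.mk.injEq]
    constructor
    · rintro ⟨⟨hk, -⟩, hfst, hsnd⟩
      exact ⟨hk, hfst, hsnd⟩
    · rintro ⟨hk, rfl, rfl⟩
      exact ⟨⟨hk, hA, hB⟩, rfl, rfl⟩
  calc
    _ = ∑ A : Finset α with A ≠ univ, ∑ B : Finset β with B ≠ univ, ECount #A #B k :=
      sum_congr rfl fun A hA ↦ sum_congr rfl fun B hB ↦
        hfiber A B (mem_filter.mp hA).2 (mem_filter.mp hB).2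
    _ = ∑ A : Finset α with A ≠ univ, ∑ c ∈ Icc 1 (Fintype.card β),
          (Fintype.card β).choose c • ECount #A (Fintype.card β - c) k :=
      sum_congr rfl fun A _ ↦ sum_filter_ne_univ_card fun b ↦ ECount #A b k
    _ = ∑ r ∈ Icc 1 (Fintype.card α), (Fintype.card α).choose r • ∑ c ∈ Icc 1 (Fintype.card β),
          (Fintype.card β).choose c • ECount (Fintype.card α - r) (Fintype.card β - c) k :=
      sum_filter_ne_univ_card fun a ↦ ∑ c ∈ Icc 1 (Fintype.card β),
          (Fintype.card β).choose c • ECount a (Fintype.card β - c) k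
    _ = _ := by simp_rw [smul_eq_mul, mul_sum, mul_assoc]

theorem domCount_add_card_filter_not_isDomSet (n m k : ℕ) :
    domCount n m k + #{S : Finset (Fin n × Fin m) | #S = k ∧ ¬ IsDomSet n m S} =
      (n * m).choose k := by
  rw [domCount, ← coe_filter_univ, Set.ncard_coe_finset, ← filter_filter, ← filter_filter,
    card_filter_add_card_filter_not, ← powerset_univ, ← powersetCard_eq_filter, card_powersetCard,
    card_univ, Fintype.card_prod, Fintype.card_fin, Fintype.card_fin]

theorem card_filter_not_isDomSet (n m k : ℕ) :
    #{S : Finset (Fin n × Fin m) | #S = k ∧ ¬ IsDomSet n m S} =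
      ∑ r ∈ Icc 1 n, ∑ c ∈ Icc 1 m, n.choose r * m.choose c * ECount (n - r) (m - c) k := by
  simp_rw [not_isDomSet_iff]
  simpa using card_filter_image_fst_ne_univ_image_snd_ne_univ (α := Fin n) (β := Fin m) k

theorem rook_dom_count_eq_general (n m k : ℕ) :
    (domCount n m k : ℤ) =
      ((n * m).choose k : ℤ) -
        ∑ r ∈ Finset.Icc 1 n, ∑ c ∈ Finset.Icc 1 m,
          (n.choose r : ℤ) * (m.choose c : ℤ) * (ECount (n - r) (m - c) k : ℤ) := by
  rw [eq_sub_iff_add_eq, ← domCount_add_card_filter_not_isDomSet, card_filter_not_isDomSet]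
  push_cast
  rfl

/-- Theorem 1: recursion expressing the dominating-set counts via `ECount`. -/
theorem rook_dom_count_eq (n m k : ℕ) (hn : 1 ≤ n) (hm : 1 ≤ m) (hk : k ≤ n * m) :
    (domCount n m k : ℤ) =
      ((n * m).choose k : ℤ) -
        ∑ r ∈ Finset.Icc 1 n, ∑ c ∈ Finset.Icc 1 m,
          (n.choose r : ℤ) * (m.choose c : ℤ) * (ECount (n - r) (m - c) k : ℤ) :=
  rook_dom_count_eq_general n m k
end

section
/- For all integers n, m ≥ 1 and every integer k with nm − n − m − min(n,m) + 2 < k ≤ nm, the number of dominating sets of cardinality k of the n×m rook graph satisfies d_{n,m}(k) = C(nm, k) − n·m·C((n−1)(m−1), k), where the identity is read in the integers and C(a,b) = 0 whenever b > a. -/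
/-!
A `k`-set `S` of squares fails to dominate exactly when some square `p` has neither a square of
`S` in its row nor in its column, i.e. when `S` lies in the `(n - 1) × (m - 1)` board left after
deleting the row and column of `p`. Two distinct such squares would confine `S` to a board with
`n - 2` rows and `m - 1` columns or `n - 1` rows and `m - 2` columns, which is impossible above
the threshold `n m - n - m - min n m + 2`. Hence the families of non-dominating `k`-sets indexed
by `p` are disjoint, each of size `C((n - 1)(m - 1), k)`.
-/

open Finset Polynomial

/-- Removing `a ≥ 1` rows and `b ≥ 1` columns, `a + b ≥ 3`, leaves at most
`max ((n - 2) (m - 1)) ((n - 1) (m - 2)) = n m - n - m - min n m + 2` squares. -/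
theorem natCast_sub_mul_sub_le_of_three_le_add {n m a b : ℕ} (ha : 1 ≤ a) (hb : 1 ≤ b)
    (hab : 3 ≤ a + b) (han : a ≤ n) (hbm : b ≤ m) :
    (((n - a) * (m - b) : ℕ) : ℤ) ≤ n * m - n - m - min n m + 2 := by
  have hmin : (min n m : ℤ) ≤ n ∧ (min n m : ℤ) ≤ m := ⟨min_le_left _ _, min_le_right _ _⟩
  have hmb : (0 : ℤ) ≤ m - b := by omega
  push_cast [han, hbm]
  rcases hb.eq_or_lt with hb1 | hb2
  · nlinarith [mul_nonneg (by omega : (0 : ℤ) ≤ a - 2) hmb]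
  · nlinarith [mul_nonneg (by omega : (0 : ℤ) ≤ a - 1) hmb,
      mul_nonneg (by omega : (0 : ℤ) ≤ b - 2) (by omega : (0 : ℤ) ≤ n - 1)]

instance (n m : ℕ) : DecidableRel (rookGraph n m).Adj :=
  fun _ _ => inferInstanceAs (Decidable (_ ∧ _))

instance inst_s5 (n m : ℕ) : DecidablePred (IsDomSet n m) :=
  fun _ => inferInstanceAs (Decidable (∀ _, _))

namespace RookGraph

variable {n m : ℕ}

def offLines (p : Fin n × Fin m) : Finset (Fin n × Fin m) := {p.1}ᶜ ×ˢ {p.2}ᶜ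

theorem card_offLines (p : Fin n × Fin m) : #(offLines p) = (n - 1) * (m - 1) := by
  simp [offLines, card_compl]

theorem not_isDomSet_iff_exists_subset_offLines {S : Finset (Fin n × Fin m)} :
    ¬ IsDomSet n m S ↔ ∃ p, S ⊆ offLines p := by
  simp only [IsDomSet, not_forall, not_or, not_exists, not_and, offLines, subset_iff,
    mem_product, mem_compl, mem_singleton]
  refine exists_congr fun p =>
    ⟨fun ⟨hp, hadj⟩ q hq => ?_, fun h => ⟨fun hp => ?_, fun q hq hadj => ?_⟩⟩
  · have hqp : q ≠ p := fun h => hp (h ▸ hq)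
    by_contra hline
    exact hadj q hq ⟨hqp, by tauto⟩
  · exact (h hp).1 rfl
  · rcases hadj.2 with h' | h'
    · exact (h hq).1 h'
    · exact (h hq).2 h'

theorem card_offLines_inter_offLines (p q : Fin n × Fin m) :
    #(offLines p ∩ offLines q) = (n - #{p.1, q.1}) * (m - #{p.2, q.2}) := by
  rw [offLines, offLines, product_inter_product, ← compl_union, ← compl_union, card_product,
    card_compl, card_compl, Fintype.card_fin, Fintype.card_fin]
  rfl

theorem card_le_of_subset_offLines_of_ne {S : Finset (Fin n × Fin m)} {p q : Fin n × Fin m}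
    (hpq : p ≠ q) (hp : S ⊆ offLines p) (hq : S ⊆ offLines q) :
    (#S : ℤ) ≤ n * m - n - m - min n m + 2 := by
  have hS := card_le_card (subset_inter hp hq)
  rw [card_offLines_inter_offLines] at hS
  refine (Nat.cast_le.2 hS).trans (natCast_sub_mul_sub_le_of_three_le_add ?_ ?_ ?_ ?_ ?_)
  · exact card_pos.2 (insert_nonempty _ _)
  · exact card_pos.2 (insert_nonempty _ _)
  · rcases ne_or_eq p.1 q.1 with h | h
    · rw [card_pair h]
      exact Nat.add_le_add_left (card_pos.2 (insert_nonempty _ _)) 2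
    · rw [h, insert_eq_of_mem (mem_singleton_self _), card_pair fun h' => hpq (Prod.ext h h')]
      rfl
  · exact (card_le_univ _).trans (Fintype.card_fin n).le
  · exact (card_le_univ _).trans (Fintype.card_fin m).le

theorem pairwiseDisjoint_powersetCard_offLines {k : ℕ}
    (hk : (n * m - n - m - min n m + 2 : ℤ) < k) :
    (Set.univ : Set (Fin n × Fin m)).PairwiseDisjoint fun p => powersetCard k (offLines p) := by
  intro p _ q _ hpq
  refine disjoint_left.2 fun S hSp hSq => ?_
  rw [mem_powersetCard] at hSp hSq
  have := card_le_of_subset_offLines_of_ne hpq hSp.1 hSq.1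
  omega

theorem card_filter_not_isDomSet {k : ℕ} (hk : (n * m - n - m - min n m + 2 : ℤ) < k) :
    #{S ∈ powersetCard k univ | ¬ IsDomSet n m S} = n * m * ((n - 1) * (m - 1)).choose k := by
  have hunion : {S ∈ powersetCard k (univ : Finset (Fin n × Fin m)) | ¬ IsDomSet n m S} =
      univ.biUnion fun p => powersetCard k (offLines p) := by
    ext S
    simp [mem_powersetCard, not_isDomSet_iff_exists_subset_offLines, and_comm]
  rw [hunion, card_biUnion (by simpa using pairwiseDisjoint_powersetCard_offLines hk)]
  simp [card_powersetCard, card_offLines]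

theorem domCount_eq_card_filter (k : ℕ) :
    domCount n m k = #{S ∈ powersetCard k univ | IsDomSet n m S} := by
  rw [domCount, ← Set.ncard_coe_finset]
  congr
  ext S
  simp [mem_powersetCard, and_comm]

end RookGraph

theorem rook_dom_count_high_density_general (n m k : ℕ)
    (hk1 : (n : ℤ) * m - n - m - min n m + 2 < (k : ℤ)) :
    (domCount n m k : ℤ) =
      ((n * m).choose k : ℤ) - (n : ℤ) * m * (((n - 1) * (m - 1)).choose k : ℤ) := by
  have hsplit := card_filter_add_card_filter_not
    (s := powersetCard k (univ : Finset (Fin n × Fin m))) (IsDomSet n m)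
  rw [← RookGraph.domCount_eq_card_filter, RookGraph.card_filter_not_isDomSet hk1,
    card_powersetCard, card_univ, Fintype.card_prod, Fintype.card_fin, Fintype.card_fin] at hsplit
  rw [← hsplit]
  push_cast
  ring

/-- Corollary 3: high-density formula for the dominating-set counts. -/
theorem rook_dom_count_high_density (n m k : ℕ) (hn : 1 ≤ n) (hm : 1 ≤ m)
    (hk1 : (n : ℤ) * m - n - m - min n m + 2 < (k : ℤ)) (hk2 : k ≤ n * m) :
    (domCount n m k : ℤ) =
      ((n * m).choose k : ℤ) - (n : ℤ) * m * (((n - 1) * (m - 1)).choose k : ℤ) :=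
  rook_dom_count_high_density_general n m k hk1
end

section
/- For all integers n, m ≥ 0, the polynomial identity Σ_{k=0}^{nm} E_{n,m}(k) x^k = Σ_{k=0}^{m} (−1)^{m−k} C(m,k) ((1+x)^k − 1)^n holds in the polynomial ring ℤ[x]. -/
open Finset Polynomial

/-!
Inclusion–exclusion over the rows and the columns that a set of cells is allowed to meet: the
subsets of `A × B` have generating function `(1 + x) ^ (#A * #B)`, and summing
`(-1) ^ (n - #A) * (1 + x) ^ (#A * #B)` over the row sets `A` by the binomial theorem gives
`((1 + x) ^ #B - 1) ^ n`.
-/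

namespace Finset

theorem subset_product_iff_image_subset {α β : Type*} [DecidableEq α] [DecidableEq β]
    {T : Finset (α × β)} {A : Finset α} {B : Finset β} :
    T ⊆ A ×ˢ B ↔ T.image Prod.fst ⊆ A ∧ T.image Prod.snd ⊆ B :=
  ⟨fun h => ⟨(image_subset_image h).trans subset_product_image_fst,
      (image_subset_image h).trans subset_product_image_snd⟩,
    fun ⟨hA, hB⟩ => subset_product.trans (product_subset_product hA hB)⟩

variable {β : Type*} [Fintype β] [DecidableEq β] {R : Type*} [CommRing R]

theorem sum_superset_neg_one_pow_card_sub (a : Finset β) :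
    ∑ B with a ⊆ B, (-1 : R) ^ (Fintype.card β - #B) = if a = univ then 1 else 0 := by
  have hcompl : ∑ B with a ⊆ B, (-1 : R) ^ (Fintype.card β - #B) =
      ∑ C ∈ aᶜ.powerset, (-1 : R) ^ #C := by
    refine sum_nbij' compl compl ?_ ?_ ?_ ?_ ?_ <;> simp [card_compl, subset_compl_comm]
  have hcast := congrArg (Int.cast : ℤ → R) (sum_powerset_neg_one_pow_card (x := aᶜ))
  push_cast at hcast
  simp [hcompl, hcast]

theorem sum_filter_eq_univ_eq_sum_neg_one_pow {γ : Type*} (s : Finset γ) (g : γ → Finset β)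
    (w : γ → R) :
    ∑ c ∈ s with g c = univ, w c =
      ∑ B, (-1) ^ (Fintype.card β - #B) * ∑ c ∈ s with g c ⊆ B, w c := by
  simp_rw [sum_filter, mul_sum]
  rw [sum_comm]
  refine sum_congr rfl fun c _ => ?_
  simp_rw [mul_ite, mul_zero, ← sum_filter, ← sum_mul, sum_superset_neg_one_pow_card_sub,
    ite_mul, one_mul, zero_mul]

end Finset

section EdgeCovers

variable (α β : Type*) [Fintype α] [Fintype β] [DecidableEq α] [DecidableEq β]

def edgeCovers : Finset (Finset (α × β)) :=
  {T | T.image Prod.fst = univ ∧ T.image Prod.snd = univ}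

variable {α β} {R : Type*} [CommRing R]

theorem sum_image_subset_pow_card (A : Finset α) (B : Finset β) (x : R) :
    ∑ T : Finset (α × β) with T.image Prod.fst ⊆ A ∧ T.image Prod.snd ⊆ B, x ^ #T =
      (x + 1) ^ (#A * #B) := by
  rw [← card_product, ← sum_pow_mul_eq_add_pow]
  refine sum_congr ?_ fun T _ => by rw [one_pow, mul_one]
  ext T
  simp only [mem_filter, mem_univ, true_and, mem_powerset]
  exact subset_product_iff_image_subset.symm

theorem sum_edgeCovers_pow_card (x : R) :
    ∑ T ∈ edgeCovers α β, x ^ #T =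
      ∑ B : Finset β, (-1) ^ (Fintype.card β - #B) * ((x + 1) ^ #B - 1) ^ Fintype.card α := by
  have hcovers : edgeCovers α β =
      {T ∈ (univ.filter fun T : Finset (α × β) => T.image Prod.snd = univ) |
        T.image Prod.fst = univ} := by
    rw [edgeCovers, filter_filter]
    simp_rw [and_comm]
  have hcolumns (A : Finset α) :
      ∑ T ∈ (univ.filter fun T : Finset (α × β) => T.image Prod.snd = univ) with
        T.image Prod.fst ⊆ A, x ^ #T =
      ∑ B : Finset β, (-1) ^ (Fintype.card β - #B) * (x + 1) ^ (#A * #B) := by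
    rw [filter_filter]
    simp_rw [and_comm (a := _ = univ), ← filter_filter, sum_filter_eq_univ_eq_sum_neg_one_pow,
      filter_filter, sum_image_subset_pow_card]
  rw [hcovers, sum_filter_eq_univ_eq_sum_neg_one_pow]
  simp_rw [hcolumns, mul_sum]
  rw [sum_comm]
  refine sum_congr rfl fun B _ => ?_
  rw [sub_eq_add_neg, ← Fintype.sum_pow_mul_eq_add_pow α ((x + 1) ^ #B) (-1), mul_sum]
  exact sum_congr rfl fun A _ => by rw [← pow_mul, mul_comm #B]; ring

end EdgeCovers

theorem ECount_eq_card_filter_edgeCovers (n m k : ℕ) :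
    ECount n m k = #{T ∈ edgeCovers (Fin n) (Fin m) | #T = k} := by
  rw [ECount, ← Set.ncard_coe_finset]
  congr 1
  ext T
  simp [edgeCovers, eq_univ_iff_forall, and_comm]

theorem sum_range_ECount_mul_pow (n m : ℕ) {R : Type*} [CommRing R] (x : R) :
    ∑ k ∈ range (n * m + 1), (ECount n m k : R) * x ^ k =
      ∑ T ∈ edgeCovers (Fin n) (Fin m), x ^ #T := by
  have hcard (T : Finset (Fin n × Fin m)) : #T ∈ range (n * m + 1) := by
    simpa [Nat.lt_succ_iff] using card_le_univ T
  rw [← sum_fiberwise_of_maps_to fun T _ => hcard T]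
  refine sum_congr rfl fun k _ => ?_
  rw [sum_congr rfl fun T hT => by rw [(mem_filter.mp hT).2], sum_const, nsmul_eq_mul,
    ECount_eq_card_filter_edgeCovers]

/-- The generating function of `ECount n m`, i.e. the edge cover polynomial of the
complete bipartite graph `K_{n,m}`. -/
theorem ECount_generating_function (n m : ℕ) :
    ∑ k ∈ Finset.range (n * m + 1), Polynomial.C (ECount n m k : ℤ) * Polynomial.X ^ k =
      ∑ k ∈ Finset.range (m + 1),
        (-1 : Polynomial ℤ) ^ (m - k) * Polynomial.C (m.choose k : ℤ) *
          ((1 + Polynomial.X) ^ k - 1) ^ n := by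
  simp_rw [map_natCast, sum_range_ECount_mul_pow, sum_edgeCovers_pow_card, Fintype.card_fin,
    ← powerset_univ,
    sum_powerset_apply_card fun k => (-1 : ℤ[X]) ^ (m - k) * ((X + 1) ^ k - 1) ^ n,
    card_univ, Fintype.card_fin, nsmul_eq_mul, add_comm X]
  exact sum_congr rfl fun k _ => by ring
end
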